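/- arXiv:1703.05677 — 6 statements merged into one kernel-verified Lean document; each statement's English description precedes it below -/
import Mathlib

section
/- Let R be a π-torsion-free ring and q̂ a power of a prime. Suppose f = Σ_{i≥0} b_i τ^i intertwines φ_E(t) = π τ^0 + Σ_{j≥1} a_j τ^j and φ_G(t) = π τ^0 + Σ_{j≥1} c_j τ^j, i.e. f ∘ φ_E(t) = φ_G(t) ∘ f in the twisted power series ring. If 1 - π^{q^r - 1} is invertible in R for all r ≥ 1, then for every r ≥ 1, b_r is uniquely determined by b_0, ..., b_{r-1} via b_r (π - π^{q^r}) = Σ_{i=0}^{r-1} (b_i a_{r-i}^{q^i} - c_{r-i} b_i^{q^{r-i}}). In particular f is determined by its linear coefficient b_0. -/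
/-!
Comparing `τ^r`-coefficients of `f ∘ φ_E(t) = φ_G(t) ∘ f` isolates the two terms involving `b_r`,
namely `b_r π^(q^r)` and `π b_r`; everything else only involves `b_0, …, b_{r-1}`. Since
`π - π^(q^r) = π (1 - π^(q^r - 1))` is a product of a non-zero-divisor and a unit, it can be
cancelled, so strong induction on `r` shows `f` is determined by `b_0`.
-/

/-- Multiplication (= composition of additive power series) in the twisted power series ring
`R{τ}` with commutation law `τ b = b^q τ`: the `τ^n`-coefficient of `f·g` is
`Σ_{i+j=n} fᵢ · (gⱼ)^(q^i)`. -/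
def tcomp (R : Type*) [CommRing R] (q : ℕ) (f g : ℕ → R) : ℕ → R :=
  fun n => ∑ i ∈ Finset.range (n + 1), f i * (g (n - i)) ^ q ^ i

section TwistedComposition

variable {R : Type*} [CommRing R] {q : ℕ}

lemma tcomp_eq_sum_add_last (f g : ℕ → R) (n : ℕ) :
    tcomp R q f g n = ∑ i ∈ Finset.range n, f i * g (n - i) ^ q ^ i + f n * g 0 ^ q ^ n := by
  rw [tcomp, Finset.sum_range_succ, Nat.sub_self]

lemma tcomp_eq_first_add_sum (f g : ℕ → R) (n : ℕ) :
    tcomp R q f g n = f 0 * g n + ∑ i ∈ Finset.range n, f (n - i) * g i ^ q ^ (n - i) := by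
  rw [tcomp, Finset.sum_range_succ', add_comm, ← Finset.sum_range_reflect]
  simp only [pow_zero, pow_one, Nat.sub_zero]
  congr 1
  refine Finset.sum_congr rfl fun i hi => ?_
  have hi : i < n := Finset.mem_range.mp hi
  rw [show n - 1 - i + 1 = n - i by omega, show n - (n - i) = i by omega]

lemma mul_sub_pow_eq_sum_of_tcomp_eq {π : R} {a c b : ℕ → R} (ha0 : a 0 = π) (hc0 : c 0 = π)
    {r : ℕ} (hcomm : tcomp R q b a r = tcomp R q c b r) :
    b r * (π - π ^ q ^ r) =
      ∑ i ∈ Finset.range r, (b i * a (r - i) ^ q ^ i - c (r - i) * b i ^ q ^ (r - i)) := by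
  rw [tcomp_eq_sum_add_last, tcomp_eq_first_add_sum, ha0, hc0] at hcomm
  rw [Finset.sum_sub_distrib]
  linear_combination -hcomm

lemma eq_of_tcomp_eq_of_apply_zero_eq {π : R} {a c b b' : ℕ → R} (ha0 : a 0 = π) (hc0 : c 0 = π)
    (hreg : ∀ n, 1 ≤ n → IsLeftRegular (π - π ^ q ^ n))
    (hcomm : ∀ n, tcomp R q b a n = tcomp R q c b n)
    (hcomm' : ∀ n, tcomp R q b' a n = tcomp R q c b' n) (h0 : b' 0 = b 0) :
    b' = b := by
  funext n
  induction n using Nat.strong_induction_on with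
  | _ n ih =>
    rcases Nat.eq_zero_or_pos n with rfl | hn
    · exact h0
    · refine hreg n hn ?_
      simp only [mul_comm (π - π ^ q ^ n)]
      rw [mul_sub_pow_eq_sum_of_tcomp_eq ha0 hc0 (hcomm' n),
        mul_sub_pow_eq_sum_of_tcomp_eq ha0 hc0 (hcomm n)]
      exact Finset.sum_congr rfl fun i hi => by rw [ih i (Finset.mem_range.mp hi)]

end TwistedComposition

lemma isLeftRegular_sub_pow {R : Type*} [CommRing R] {π : R} {m : ℕ}
    (htf : ∀ x : R, π * x = 0 → x = 0) (hu : IsUnit (1 - π ^ (m - 1))) (hm : 1 ≤ m) :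
    IsLeftRegular (π - π ^ m) := by
  have hfac : π - π ^ m = π * (1 - π ^ (m - 1)) := by
    rw [mul_sub, mul_one, ← pow_succ', Nat.sub_add_cancel hm]
  rw [hfac]
  exact (isLeftRegular_iff_right_eq_zero_of_mul.mpr htf).mul hu.isRegular.left

/-- Proposition (tangent): let `R` be π-torsion free with `1 - π^(q^r - 1)` invertible for all
`r ≥ 1`.  If `f = Σ bᵢ τ^i` intertwines `φ_E(t) = π τ^0 + Σ_{j≥1} aⱼ τ^j` and
`φ_G(t) = π τ^0 + Σ_{j≥1} cⱼ τ^j`, i.e. `f ∘ φ_E(t) = φ_G(t) ∘ f`, then for every `r ≥ 1`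
we have `b_r (π - π^(q^r)) = Σ_{i=0}^{r-1} (bᵢ a_{r-i}^(q^i) - c_{r-i} bᵢ^(q^{r-i}))`,
so each `b_r` is determined by `b₀,…,b_{r-1}`; in particular `f` is determined by `b₀`. -/
theorem stmt2 (R : Type*) [CommRing R] (q : ℕ) (π : R)
    (htf : ∀ x : R, π * x = 0 → x = 0)
    (hinv : ∀ r : ℕ, 1 ≤ r → IsUnit (1 - π ^ (q ^ r - 1)))
    (a c b : ℕ → R) (ha0 : a 0 = π) (hc0 : c 0 = π)
    (hcomm : ∀ n, tcomp R q b a n = tcomp R q c b n) :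
    (∀ r : ℕ, 1 ≤ r →
      b r * (π - π ^ q ^ r) =
        ∑ i ∈ Finset.range r,
          (b i * (a (r - i)) ^ q ^ i - c (r - i) * (b i) ^ q ^ (r - i))) ∧
    (∀ b' : ℕ → R, (∀ n, tcomp R q b' a n = tcomp R q c b' n) → b' 0 = b 0 → b' = b) := by
  have hreg : ∀ n, 1 ≤ n → IsLeftRegular (π - π ^ q ^ n) := by
    rcases Nat.eq_zero_or_pos q with rfl | hq
    · -- for `q = 0`, `hinv 1` says that `1 - π ^ 0 = 0` is a unit, so `R` is trivial
      have : Subsingleton R :=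
        subsingleton_of_zero_eq_one (isUnit_zero_iff.mp (by simpa using hinv 1 le_rfl))
      exact fun _ _ x y _ => Subsingleton.elim x y
    · exact fun n hn => isLeftRegular_sub_pow htf (hinv n hn) (Nat.one_le_pow _ _ hq)
  exact ⟨fun r _ => mul_sub_pow_eq_sum_of_tcomp_eq ha0 hc0 (hcomm r),
    fun b' hcomm' h0 => eq_of_tcomp_eq_of_apply_zero_eq ha0 hc0 hreg hcomm hcomm' h0⟩
end

section
/- Let b_0 = 1 and define b_i = π^{-1}(1-π^{q^i-1})^{-1} Σ_{j=1}^i b_{i-j} a_j^{q^{i-j}} for i ≥ 1, where v(a_j) ≥ q^j - 1 for all j ≥ 1 and q ≥ 3. Then v(b_i) ≥ i for all i ≥ 0. -/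
/-!
Induct on `i`. The `j`-th summand of the recursion has valuation at least
`(i - j) + (q ^ j - 1) q ^ (i - j) ≥ i + 1`, and `1 - π ^ (q ^ i - 1)` is a unit of the local
ring `R`, so `π ^ (i + 1) ∣ π bᵢ`; cancelling `π` gives `π ^ i ∣ bᵢ`.
-/

lemma Nat.add_two_le_pow {q j : ℕ} (hq : 3 ≤ q) (hj : 1 ≤ j) : j + 2 ≤ q ^ j := by
  obtain ⟨k, rfl⟩ : ∃ k, j = k + 1 := ⟨j - 1, by omega⟩
  have hk : k < q ^ k := Nat.lt_pow_self (by omega)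
  rw [pow_succ]
  nlinarith

lemma Nat.succ_le_sub_add_mul_pow {q i j : ℕ} (hq : 3 ≤ q) (hj : 1 ≤ j) (hji : j ≤ i) :
    i + 1 ≤ (i - j) + (q ^ j - 1) * q ^ (i - j) := by
  have hqj : j + 2 ≤ q ^ j := Nat.add_two_le_pow hq hj
  have hle : q ^ j - 1 ≤ (q ^ j - 1) * q ^ (i - j) :=
    Nat.le_mul_of_pos_right _ (Nat.pow_pos (by omega))
  omega

lemma isUnit_one_sub_pow_of_not_isUnit {R : Type*} [CommRing R] [IsLocalRing R] {π : R}
    (hπ : ¬IsUnit π) {k : ℕ} (hk : k ≠ 0) : IsUnit (1 - π ^ k) :=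
  IsLocalRing.isUnit_one_sub_self_of_mem_nonunits _ ((isUnit_pow_iff hk).not.mpr hπ)

lemma pow_dvd_mul_pow_of_pow_dvd {R : Type*} [CommMonoid R] {π x y : R} {m n : ℕ}
    (hx : π ^ m ∣ x) (hy : π ^ n ∣ y) (k : ℕ) : π ^ (m + n * k) ∣ x * y ^ k := by
  rw [pow_add, pow_mul]
  exact mul_dvd_mul hx (pow_dvd_pow_of_dvd hy k)

theorem stmt4_general (R : Type*) [CommRing R] [IsDomain R] [IsDiscreteValuationRing R]
    (π : R) (hπ : Irreducible π) (q : ℕ) (hq : 3 ≤ q)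
    (a b : ℕ → R)
    (ha : ∀ j, 1 ≤ j → π ^ (q ^ j - 1) ∣ a j)
    (hrec : ∀ i, 1 ≤ i →
      π * (1 - π ^ (q ^ i - 1)) * b i =
        ∑ j ∈ Finset.Icc 1 i, b (i - j) * (a j) ^ q ^ (i - j)) :
    ∀ i, π ^ i ∣ b i := by
  intro i
  induction i using Nat.strong_induction_on with
  | _ i ih =>
    rcases Nat.eq_zero_or_pos i with rfl | hi
    · simp
    have hsum : π ^ (i + 1) ∣ ∑ j ∈ Finset.Icc 1 i, b (i - j) * (a j) ^ q ^ (i - j) := by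
      refine Finset.dvd_sum fun j hj => ?_
      obtain ⟨hj1, hji⟩ := Finset.mem_Icc.mp hj
      exact (pow_dvd_pow π (Nat.succ_le_sub_add_mul_pow hq hj1 hji)).trans
        (pow_dvd_mul_pow_of_pow_dvd (ih (i - j) (by omega)) (ha j hj1) _)
    have hunit : IsUnit (1 - π ^ (q ^ i - 1)) :=
      isUnit_one_sub_pow_of_not_isUnit hπ.not_isUnit
        (by have := Nat.add_two_le_pow hq hi; omega)
    rw [← hrec i hi, mul_right_comm, hunit.dvd_mul_right, pow_succ'] at hsum
    exact (mul_dvd_mul_iff_left hπ.ne_zero).mp hsum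

/-- Valuation bound in theorem (pal3): over a DVR `R` with uniformizer `π` and `q ≥ 3`,
if `b₀ = 1` and `b` satisfies the recursion
`bᵢ = π⁻¹ (1 - π^(q^i - 1))⁻¹ Σ_{j=1}^{i} b_{i-j} aⱼ^(q^{i-j})`
(written multiplicatively to stay inside `R`), where `v(aⱼ) ≥ q^j - 1` for all `j ≥ 1`,
then `v(bᵢ) ≥ i` for all `i ≥ 0`. -/
theorem stmt4 (R : Type*) [CommRing R] [IsDomain R] [IsDiscreteValuationRing R]
    (π : R) (hπ : Irreducible π) (q : ℕ) (hq : 3 ≤ q)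
    (a b : ℕ → R) (hb0 : b 0 = 1)
    (ha : ∀ j, 1 ≤ j → π ^ (q ^ j - 1) ∣ a j)
    (hrec : ∀ i, 1 ≤ i →
      π * (1 - π ^ (q ^ i - 1)) * b i =
        ∑ j ∈ Finset.Icc 1 i, b (i - j) * (a j) ^ q ^ (i - j)) :
    ∀ i, π ^ i ∣ b i :=
  stmt4_general R π hπ q hq a b ha hrec
end

section
/- Let R be a discrete valuation ring of generic characteristic with uniformizer π = θ(t), and let φ_E(t) = Σ_{j=0}^r a_j τ^j with a_0 = π, a_r a unit, r ≥ 1. Then the only restricted twisted power series f = Σ_{i≥0} b_i τ^i satisfying π f = f ∘ φ_E(t) (i.e. the only A-linear homomorphism E → Ĝ_a) is f = 0. -/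
section

variable {R : Type*} [CommRing R] {q r : ℕ} {a b : ℕ → R}

theorem tcomp_add_eq (hq : q ≠ 0) (ha : ∀ j, r < j → a j = 0) (m : ℕ) :
    tcomp R q b a (m + r) =
      b m * a r ^ q ^ m + ∑ i ∈ Finset.Ico (m + 1) (m + r + 1), b i * a (m + r - i) ^ q ^ i := by
  have hlow : ∑ i ∈ Finset.range m, b i * a (m + r - i) ^ q ^ i = 0 :=
    Finset.sum_eq_zero fun i hi => by
      rw [ha _ (by simp at hi; omega), zero_pow (pow_ne_zero _ hq), mul_zero]
  rw [tcomp, Finset.range_eq_Ico, ← Finset.sum_Ico_consecutive _ (Nat.zero_le m) (by omega),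
    ← Finset.range_eq_Ico, hlow, zero_add, Finset.sum_eq_sum_Ico_succ_bot (by omega),
    Nat.add_sub_cancel_left]

variable {π : R} {k : ℕ}

theorem pow_succ_dvd_of_forall_gt (hq : q ≠ 0) (ha : ∀ j, r < j → a j = 0) (har : IsUnit (a r))
    (hchar : ∀ n, tcomp R q b a n = π * b n) (hk : ∀ i, π ^ k ∣ b i) (m : ℕ)
    (hm : ∀ i > m, π ^ (k + 1) ∣ b i) : π ^ (k + 1) ∣ b m := by
  have hsum : π ^ (k + 1) ∣ ∑ i ∈ Finset.Ico (m + 1) (m + r + 1), b i * a (m + r - i) ^ q ^ i :=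
    Finset.dvd_sum fun i hi => (hm i (by simp at hi; omega)).mul_right _
  have hleading : b m * a r ^ q ^ m =
      π * b (m + r) - ∑ i ∈ Finset.Ico (m + 1) (m + r + 1), b i * a (m + r - i) ^ q ^ i := by
    rw [← hchar, tcomp_add_eq hq ha, add_sub_cancel_right]
  have hdvd : π ^ (k + 1) ∣ b m * a r ^ q ^ m := by
    rw [hleading]
    exact dvd_sub (pow_succ' π k ▸ mul_dvd_mul_left π (hk _)) hsum
  exact (har.pow _).dvd_mul_right.mp hdvd

theorem pow_dvd_of_restricted (hq : q ≠ 0) (ha : ∀ j, r < j → a j = 0) (har : IsUnit (a r))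
    (hchar : ∀ n, tcomp R q b a n = π * b n)
    (hrestricted : ∀ k : ℕ, ∃ N : ℕ, ∀ i, N ≤ i → π ^ k ∣ b i) (k i : ℕ) : π ^ k ∣ b i := by
  induction k generalizing i with
  | zero => simp
  | succ k ih =>
    obtain ⟨N, hN⟩ := hrestricted (k + 1)
    exact Nat.strong_decreasing_induction ⟨N, fun i hi => hN i hi.le⟩
      (pow_succ_dvd_of_forall_gt hq ha har hchar ih) i

end

theorem stmt5_general (R : Type*) [CommRing R] [IsDomain R] [IsDiscreteValuationRing R]
    (π : R) (hπ : Irreducible π)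
    (p h : ℕ) (hp : p.Prime) (q : ℕ) (hq : q = p ^ h)
    (r : ℕ) (a : ℕ → R)
    (har : IsUnit (a r)) (hatop : ∀ j, r < j → a j = 0)
    (b : ℕ → R)
    (hrestricted : ∀ k : ℕ, ∃ N : ℕ, ∀ i, N ≤ i → π ^ k ∣ b i)
    (hchar : ∀ n, tcomp R q b a n = π * b n) :
    b = 0 := by
  have hq0 : q ≠ 0 := hq ▸ pow_ne_zero h hp.ne_zero
  funext i
  by_contra hbi
  exact FiniteMultiplicity.not_iff_forall.mpr
    (fun k => pow_dvd_of_restricted hq0 hatop har hchar hrestricted k i)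
    (FiniteMultiplicity.of_not_isUnit hπ.not_isUnit hbi)

/-- Theorem (order0): let `R` be a π-torsion-free DVR of generic characteristic with
uniformizer `π = θ(t)`, and let `φ_E(t) = Σ_{j=0}^r aⱼ τ^j` be a Drinfeld module of rank
`r ≥ 1` (so `a₀ = π`, `a_r` a unit).  Then the only restricted twisted power series
`f = Σ bᵢ τ^i` (restrictedness: `bᵢ → 0` π-adically) with `π·f = f ∘ φ_E(t)` — i.e. the only
`A`-linear homomorphism `E → Ĝₐ` — is `f = 0`. -/
theorem stmt5 (R : Type*) [CommRing R] [IsDomain R] [IsDiscreteValuationRing R]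
    (π : R) (hπ : Irreducible π)
    (p h : ℕ) (hp : p.Prime) (hh : 1 ≤ h) (q : ℕ) (hq : q = p ^ h)
    (r : ℕ) (hr : 1 ≤ r) (a : ℕ → R)
    (ha0 : a 0 = π) (har : IsUnit (a r)) (hatop : ∀ j, r < j → a j = 0)
    (b : ℕ → R)
    (hrestricted : ∀ k : ℕ, ∃ N : ℕ, ∀ i, N ≤ i → π ^ k ∣ b i)
    (hchar : ∀ n, tcomp R q b a n = π * b n) :
    b = 0 :=
  stmt5_general R π hπ p h hp q hq r a har hatop b hrestricted hchar
end

section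
/- Let f: B → W_n(B) be the map making the diagram with F V − V F: W_n(B) → W_n(B) and the n-th truncation T^n: W_n(B) → B commute (such f exists since (FV − VF) ∘ V = 0). Then f has the form f(x) = (π x, c_1 x^{q̂}, c_2 x^{q̂²}, ..., c_n x^{q̂ⁿ}) for some constants c_j ∈ R independent of B. -/
/-!
For the ghost components `w_k(x) = Σ_{i ≤ k} π^i x_i^(q^(k-i))` one has `w_k(F x) = w_{k+1}(x)`,
`w_0(V x) = 0` and `w_{k+1}(V x) = π w_k(x)`, so `(F V - V F)(x)` has ghost components
`(π x₀, 0, …, 0)`; in characteristic `p` the ghost map commutes with componentwise subtraction.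
The vector `(c_j b^(q^j))_j` has ghost components `(w_k(c) b^(q^k))_k`, so it suffices to find
`c ∈ R^ℕ` with ghost components `(π, 0, 0, …)`. Solving for `c` recursively, every `c_j` is
divisible by `π` because `i + q^(k-i) > k` when `q ≥ 2`, so no division is needed. Finally, as `π`
is a non-zero-divisor on `B`, the truncated ghost map is injective.
-/

open Finset

namespace FunctionFieldWitt

section Ghost

variable {B : Type*} [CommRing B]

def ghost (π : B) (q : ℕ) (x : ℕ → B) (k : ℕ) : B :=
  ∑ i ∈ range (k + 1), π ^ i * x i ^ q ^ (k - i)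

def verschiebung (x : ℕ → B) : ℕ → B := fun m => if m = 0 then 0 else x (m - 1)

variable {π : B} {q : ℕ}

lemma ghost_congr {x y : ℕ → B} {k : ℕ} (h : ∀ i ≤ k, x i = y i) :
    ghost π q x k = ghost π q y k :=
  sum_congr rfl fun i hi => by rw [h i (Nat.lt_succ_iff.mp (mem_range.mp hi))]

lemma ghost_eq_sum_add (x : ℕ → B) (k : ℕ) :
    ghost π q x k = ∑ i ∈ range k, π ^ i * x i ^ q ^ (k - i) + π ^ k * x k := by
  simp [ghost, sum_range_succ]

lemma eq_of_ghost_eq (hπ : IsLeftRegular π) {x y : ℕ → B} {n : ℕ}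
    (h : ∀ k ≤ n, ghost π q x k = ghost π q y k) : ∀ k ≤ n, x k = y k := by
  intro k
  induction k using Nat.strong_induction_on with
  | _ k ih =>
    intro hk
    have hlow : ∑ i ∈ range k, π ^ i * x i ^ q ^ (k - i) =
        ∑ i ∈ range k, π ^ i * y i ^ q ^ (k - i) :=
      sum_congr rfl fun i hi => by
        rw [ih i (mem_range.mp hi) ((mem_range.mp hi).le.trans hk)]
    have := h k hk
    rw [ghost_eq_sum_add, ghost_eq_sum_add, hlow, add_right_inj] at this
    exact hπ.pow k this

lemma ghost_verschiebung_zero (x : ℕ → B) : ghost π q (verschiebung x) 0 = 0 := by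
  simp [ghost, verschiebung]

lemma ghost_verschiebung_succ (hq : q ≠ 0) (x : ℕ → B) (k : ℕ) :
    ghost π q (verschiebung x) (k + 1) = π * ghost π q x k := by
  rw [ghost, sum_range_succ', ghost, mul_sum]
  simp [verschiebung, hq, pow_succ', mul_assoc]

lemma ghost_sub {p : ℕ} [ExpChar B p] (f : ℕ) (x y : ℕ → B) (k : ℕ) :
    ghost π (p ^ f) (x - y) k = ghost π (p ^ f) x k - ghost π (p ^ f) y k := by
  simp only [ghost, ← sum_sub_distrib, ← mul_sub, Pi.sub_apply, ← pow_mul, sub_pow_expChar_pow]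

lemma ghost_frobenius_verschiebung_sub (hq : q ≠ 0) {n : ℕ} {F : (ℕ → B) → ℕ → B}
    (hF : ∀ x, ∀ k ≤ n, ghost π q (F x) k = ghost π q x (k + 1)) (x : ℕ → B) {k : ℕ}
    (hk : k ≤ n) :
    ghost π q (F (verschiebung x)) k - ghost π q (verschiebung (F x)) k =
      if k = 0 then π * x 0 else 0 := by
  rw [hF _ k hk, ghost_verschiebung_succ hq]
  rcases k with _ | k
  · rw [ghost_verschiebung_zero]
    simp [ghost]
  · rw [ghost_verschiebung_succ hq, hF x k (by omega)]
    simp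

lemma ghost_map_mul_pow {R : Type*} [CommRing R] (φ : R →+* B) (π : R) (c : ℕ → R) (b : B)
    (k : ℕ) :
    ghost (φ π) q (fun i => φ (c i) * b ^ q ^ i) k = φ (ghost π q c k) * b ^ q ^ k := by
  rw [ghost, ghost, map_sum, sum_mul]
  refine sum_congr rfl fun i hi => ?_
  have hexp : q ^ i * q ^ (k - i) = q ^ k := by
    rw [← pow_add, Nat.add_sub_cancel' (Nat.lt_succ_iff.mp (mem_range.mp hi))]
  rw [mul_pow, ← pow_mul, hexp, map_mul, map_pow, map_pow]
  ring

end Ghost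

section Coeff

variable {R : Type*} [CommRing R]

/-- `π * ghostDeltaCoeff π q k` is the `k`-th coordinate of the vector with ghost components
`(π, 0, 0, …)`; the natural-number subtraction in the exponent does not truncate once `2 ≤ q`. -/
def ghostDeltaCoeff (π : R) (q : ℕ) : ℕ → R
  | 0 => 1
  | k + 1 => -∑ i : Fin (k + 1),
      π ^ (i + q ^ (k + 1 - i) - (k + 2)) * ghostDeltaCoeff π q i ^ q ^ (k + 1 - i)

lemma ghost_mul_ghostDeltaCoeff {π : R} {q : ℕ} (hq : 2 ≤ q) (k : ℕ) :
    ghost π q (fun i => π * ghostDeltaCoeff π q i) k = if k = 0 then π else 0 := by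
  rcases k with _ | m
  · simp [ghost, ghostDeltaCoeff]
  rw [if_neg m.succ_ne_zero, ghost_eq_sum_add, ghostDeltaCoeff, Fin.sum_univ_eq_sum_range
      (fun i => π ^ (i + q ^ (m + 1 - i) - (m + 2)) * ghostDeltaCoeff π q i ^ q ^ (m + 1 - i)),
    mul_neg, mul_neg, mul_sum, mul_sum, add_neg_eq_zero]
  refine sum_congr rfl fun i hi => ?_
  have hexp : m + 1 + 1 + (i + q ^ (m + 1 - i) - (m + 2)) = i + q ^ (m + 1 - i) := by
    have := Nat.lt_pow_self (n := m + 1 - i) hq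
    omega
  rw [mul_pow, ← mul_assoc, ← pow_add, ← mul_assoc, ← mul_assoc, ← pow_succ, ← pow_add, hexp]

end Coeff

end FunctionFieldWitt

open FunctionFieldWitt

/-- Lemma (comm): function-field Witt vectors, in coordinates.  Let `B` be a π-torsion-free
`R`-algebra of characteristic `p`, with `q̂ = p^f`.  Witt vectors of length `n+1` are coordinate
vectors, the ghost components being `w_k(x) = Σ_{i≤k} π^i xᵢ^(q̂^(k-i))`; `V` is the explicit
shift and `F` is any map with the Frobenius ghost property `w_k(F x) = w_{k+1}(x)`.
If `g : B → W_n(B)` makes the diagram with `F V - V F` and the truncation `T^n(x) = x₀`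
commute (i.e. `(F V - V F)(x) = g(x₀)` componentwise, subtraction being componentwise in the
function-field setting), then `g` has the form
`g(b) = (π b, c₁ b^q̂, c₂ b^(q̂²), …, cₙ b^(q̂ⁿ))` for constants `cⱼ ∈ R`. -/
theorem stmt10 (R : Type*) [CommRing R] (B : Type*) [CommRing B] [Algebra R B]
    (p : ℕ) (hp : p.Prime) [CharP B p]
    (f : ℕ) (hf : 1 ≤ f) (qh : ℕ) (hqh : qh = p ^ f)
    (πR : R)
    (htf : ∀ b : B, algebraMap R B πR * b = 0 → b = 0)
    (n : ℕ)
    (F : (ℕ → B) → (ℕ → B))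
    (hF : ∀ x : ℕ → B, ∀ k, k ≤ n →
      ∑ i ∈ Finset.range (k + 1), algebraMap R B πR ^ i * (F x i) ^ qh ^ (k - i) =
        ∑ i ∈ Finset.range (k + 2), algebraMap R B πR ^ i * (x i) ^ qh ^ (k + 1 - i))
    (g : B → ℕ → B)
    (hg : ∀ x : ℕ → B, ∀ k, k ≤ n →
      F (fun m => if m = 0 then 0 else x (m - 1)) k
        - (if k = 0 then 0 else F x (k - 1)) = g (x 0) k) :
    ∃ c : ℕ → R, ∀ b : B,
      g b 0 = algebraMap R B πR * b ∧
      ∀ j, 1 ≤ j → j ≤ n → g b j = algebraMap R B (c j) * b ^ qh ^ j := by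
  subst hqh
  have : Fact p.Prime := ⟨hp⟩
  have hq : 2 ≤ p ^ f := hp.two_le.trans (Nat.le_self_pow (by omega) p)
  have hπ : IsLeftRegular (algebraMap R B πR) := isLeftRegular_iff_right_eq_zero_of_mul.mpr htf
  set c : ℕ → R := fun j => πR * ghostDeltaCoeff πR (p ^ f) j
  refine ⟨c, fun b => ?_⟩
  have hcoord : ∀ j ≤ n, g b j = algebraMap R B (c j) * b ^ (p ^ f) ^ j := by
    refine eq_of_ghost_eq (q := p ^ f) hπ fun k hk => ?_
    rw [ghost_map_mul_pow, ghost_mul_ghostDeltaCoeff hq,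
      ghost_congr (y := F (verschiebung fun _ => b) - verschiebung (F fun _ => b))
        fun i hi => (hg (fun _ => b) i (hi.trans hk)).symm, ghost_sub,
      ghost_frobenius_verschiebung_sub (by omega) hF _ hk]
    split_ifs with hk0
    · rw [hk0, pow_zero, pow_one]
    · simp
  exact ⟨by simpa [c, ghostDeltaCoeff] using hcoord 0 n.zero_le, fun j _ hj => hcoord j hj⟩
end

section
/- Let φ(a) = Σ_j α_j(a) τ^j express the A-action of a formal Drinfeld module structure on the formal additive group over R. If a ∈ 𝔭^n, then α_j(a) ∈ 𝔭^{n−j} R for all j ≤ n. Consequently the map a ↦ φ(a) is 𝔭-adically continuous and extends uniquely to a continuous action of the completion Â on the formal additive group. -/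
/-! The key step: if `φ(a)₀ ∈ I` and `φ(b)ₖ ∈ I^(n-k)` for all `k`, then in
`φ(ab)ⱼ = φ(a)₀ φ(b)ⱼ + Σ_{i ≥ 1} φ(a)ᵢ φ(b)_{j-i}^(q^i)` the first term gains a factor from `I`,
and each later term lies in `I^((n-j+i) q^i) ⊆ I^(n+1-j)`. Induction on `n` with `a = t` gives the
bound, and continuity follows from additivity. When `q = 0` the twisted exponents vanish and that
estimate fails; instead `φ(a)ᵢ = 0` for all `i ≥ 1`, as one sees by comparing `φ(a · 1)` with
`φ(a)`. -/

namespace FormalDrinfeld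

variable {R A : Type*} [CommRing R] [CommRing A] {q : ℕ} {φ : A → ℕ → R}

/-- Multiplicativity of `a ↦ Σⱼ φ a j τ^j` for the product of `R{{τ}}`, where `τ b = b^q τ`. -/
def IsTwistedMultiplicative (q : ℕ) (φ : A → ℕ → R) : Prop :=
  ∀ a b : A, ∀ n : ℕ,
    φ (a * b) n = ∑ i ∈ Finset.range (n + 1), φ a i * (φ b (n - i)) ^ q ^ i

lemma coeff_mul_of_q_eq_zero (hmul : IsTwistedMultiplicative 0 φ) (a b : A) (n : ℕ) :
    φ (a * b) n = φ a 0 * φ b n + ∑ i ∈ Finset.range n, φ a (i + 1) := by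
  rw [hmul, Finset.sum_range_succ', add_comm]
  simp

lemma coeff_one_succ_of_q_eq_zero (hmul : IsTwistedMultiplicative 0 φ) (h1 : φ 1 0 = 1)
    (m : ℕ) : φ 1 (m + 1) = 0 := by
  have hsum (n : ℕ) : ∑ i ∈ Finset.range n, φ 1 (i + 1) = 0 := by
    simpa [h1] using coeff_mul_of_q_eq_zero hmul 1 1 n
  simpa [Finset.sum_range_succ, hsum m] using hsum (m + 1)

lemma coeff_succ_of_q_eq_zero (hmul : IsTwistedMultiplicative 0 φ) (h1 : φ 1 0 = 1)
    (a : A) (m : ℕ) : φ a (m + 1) = 0 := by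
  have hcoeff (n : ℕ) : φ a (n + 1) = ∑ i ∈ Finset.range (n + 1), φ a (i + 1) := by
    simpa [coeff_one_succ_of_q_eq_zero hmul h1] using coeff_mul_of_q_eq_zero hmul a 1 (n + 1)
  have hsum : ∑ i ∈ Finset.range (m + 1), φ a (i + 1) = 0 := by
    simpa [Finset.sum_range_succ _ (m + 1)] using hcoeff (m + 1)
  rw [hcoeff, hsum]

lemma coeff_mul_mem_pow_succ (hmul : IsTwistedMultiplicative q φ) (h1 : φ 1 0 = 1)
    {I : Ideal R} {n : ℕ} {a b : A} (ha : φ a 0 ∈ I) (hb : ∀ k, φ b k ∈ I ^ (n - k)) (j : ℕ) :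
    φ (a * b) j ∈ I ^ (n + 1 - j) := by
  rw [hmul, Finset.sum_range_succ']
  refine Ideal.add_mem _ (Ideal.sum_mem _ fun i hi => ?_) ?_
  · have hij : i + 1 ≤ j := Finset.mem_range.mp hi
    rcases Nat.eq_zero_or_pos q with rfl | hq
    · simp [coeff_succ_of_q_eq_zero hmul h1]
    have hpow := Ideal.pow_mem_pow (hb (j - (i + 1))) (q ^ (i + 1))
    rw [← pow_mul] at hpow
    refine Ideal.mul_mem_left _ _ (Ideal.pow_le_pow_right ?_ hpow)
    calc n + 1 - j ≤ n - (j - (i + 1)) := by omega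
      _ ≤ (n - (j - (i + 1))) * q ^ (i + 1) := Nat.le_mul_of_pos_right _ (pow_pos hq _)
  · rw [pow_zero, pow_one, Nat.sub_zero]
    refine Ideal.pow_le_pow_right (show n + 1 - j ≤ n - j + 1 by omega) ?_
    rw [pow_succ']
    exact Ideal.mul_mem_mul ha (hb j)

lemma coeff_pow_mul_mem (hmul : IsTwistedMultiplicative q φ) (h1 : φ 1 0 = 1)
    {I : Ideal R} {t : A} (ht : φ t 0 ∈ I) (n : ℕ) (c : A) (j : ℕ) :
    φ (t ^ n * c) j ∈ I ^ (n - j) := by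
  induction n generalizing c j with
  | zero => simp
  | succ n ih =>
    rw [pow_succ', mul_assoc]
    exact coeff_mul_mem_pow_succ hmul h1 ht (ih c) j

end FormalDrinfeld

open FormalDrinfeld in
/-- Proposition on continuity of a formal Drinfeld module structure: let
`φ : A → R{{τ}}` be a strict `A`-module structure on the formal additive group, encoded by
its coefficient functions `φ a = Σⱼ αⱼ(a) τ^j` (so `φ` is additive, multiplicative for the
twisted multiplication `(φ(ab))ₙ = Σ_{i+j=n} φ(a)ᵢ (φ(b)ⱼ)^(q^i)`, and strict:
`φ(a)₀ = θ(a)`), with `𝔭 = (t)` and `π = θ(t)`.  Then `a ∈ 𝔭^n` implies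
`αⱼ(a) ∈ 𝔭^(n-j) R` for all `j`; consequently `a ↦ φ(a)` is `𝔭`-adically continuous
(coefficientwise). -/
theorem stmt13 (R : Type*) [CommRing R] (q : ℕ)
    (A : Type*) [CommRing A] (t : A) (θ : A →+* R)
    (φ : A → ℕ → R)
    (hadd : ∀ a b : A, φ (a + b) = φ a + φ b)
    (hmul : ∀ a b : A, ∀ n : ℕ,
      φ (a * b) n = ∑ i ∈ Finset.range (n + 1), φ a i * (φ b (n - i)) ^ q ^ i)
    (hstrict : ∀ a : A, φ a 0 = θ a)
    (π : R) (hπ : θ t = π) :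
    (∀ n : ℕ, ∀ a ∈ Ideal.span {t} ^ n, ∀ j : ℕ,
      φ a j ∈ Ideal.span {π} ^ (n - j)) ∧
    (∀ j k : ℕ, ∃ N : ℕ, ∀ a b : A,
      a - b ∈ Ideal.span {t} ^ N → φ a j - φ b j ∈ Ideal.span {π} ^ k) := by
  have h1 : φ 1 0 = 1 := by rw [hstrict, map_one]
  have ht : φ t 0 ∈ Ideal.span {π} := by
    rw [hstrict, hπ]
    exact Ideal.mem_span_singleton_self π
  have hbound (n : ℕ) (a : A) (ha : a ∈ Ideal.span {t} ^ n) (j : ℕ) :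
      φ a j ∈ Ideal.span {π} ^ (n - j) := by
    obtain ⟨c, rfl⟩ := Ideal.mem_span_singleton'.mp (Ideal.span_singleton_pow t n ▸ ha)
    rw [mul_comm]
    exact coeff_pow_mul_mem hmul h1 ht n c j
  refine ⟨hbound, fun j k => ⟨k + j, fun a b hab => ?_⟩⟩
  have hsub : φ (a - b) = φ a - φ b := (AddMonoidHom.mk' φ hadd).map_sub a b
  simpa [hsub] using hbound (k + j) (a - b) hab j
end

section
/- Let E be a Drinfeld module of rank 2 over a DVR R with φ_E(t)(x) = π x + a x^q + x^{q²}, where t is irreducible of degree f in A = F_q[v] and q ≥ 3. Then in Ext_A(E, Ĝ_a) one has the relation τ^{i+1} ≡ (−1)^i a^{(q^i − 1)/(q−1)} τ^1 mod π for all i ≥ 0, where the relations in Ext are generated by π τ^j ≡ τ^j ∘ (π τ^0 + a τ^1 + τ^2) for j ≥ 0. -/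
namespace Tcomp

variable {R : Type*} [CommRing R] (q : ℕ)

theorem add_left (f f' g : ℕ → R) : tcomp R q (f + f') g = tcomp R q f g + tcomp R q f' g := by
  funext n
  simp only [tcomp, Pi.add_apply, add_mul, Finset.sum_add_distrib]

theorem smul_left (c : R) (f g : ℕ → R) : tcomp R q (c • f) g = c • tcomp R q f g := by
  funext n
  simp only [tcomp, Pi.smul_apply, smul_eq_mul, Finset.mul_sum, mul_assoc]

theorem single_left_apply (j : ℕ) (g : ℕ → R) (n : ℕ) :
    tcomp R q (Pi.single j 1) g n = if j ≤ n then g (n - j) ^ q ^ j else 0 := by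
  simp only [tcomp, Pi.single_apply, ite_mul, one_mul, zero_mul]
  rw [Finset.sum_ite_eq' (Finset.range (n + 1)) j]
  simp

/-- The inner derivation `α ↦ π α - α ∘ φ` of `R{τ}^` attached to `φ = φ_E(t)`. -/
def innerDeriv (π : R) (φ : ℕ → R) : (ℕ → R) →ₗ[R] (ℕ → R) where
  toFun α := π • α - tcomp R q α φ
  map_add' α β := by rw [add_left]; module
  map_smul' c α := by rw [smul_left]; simp only [RingHom.id_apply]; module

/-- The kernel of `R{τ}^ → Ext_A(E, Ĝₐ) / π`. -/
def extModPiKer (π : R) (φ : ℕ → R) : Submodule R (ℕ → R) :=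
  LinearMap.range (innerDeriv q π φ) ⊔ LinearMap.range (π • LinearMap.id)

/-- The coefficients of `φ_E(t) = π + a τ + τ²`. -/
def rankTwoPhi (π a : R) : ℕ → R :=
  fun n => if n = 0 then π else if n = 1 then a else if n = 2 then 1 else 0

variable {q}

theorem single_comp_rankTwoPhi (hq : 0 < q) (π a : R) (j : ℕ) :
    tcomp R q (Pi.single j 1) (rankTwoPhi π a) =
      π ^ q ^ j • Pi.single j 1 + a ^ q ^ j • Pi.single (j + 1) 1 + Pi.single (j + 2) 1 := by
  have hqj : q ^ j ≠ 0 := (pow_pos hq j).ne'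
  funext n
  simp only [single_left_apply, rankTwoPhi, Pi.add_apply, Pi.smul_apply, Pi.single_apply,
    smul_eq_mul]
  split_ifs <;> first | omega | simp [zero_pow hqj]

theorem single_add_two_add_mem (hq : 0 < q) (π a : R) (j : ℕ) :
    Pi.single (j + 2) 1 + a ^ q ^ j • Pi.single (j + 1) 1 ∈ extModPiKer q π (rankTwoPhi π a) := by
  have hπ : π ^ q ^ j = π * π ^ (q ^ j - 1) := by
    rw [← pow_succ']
    congr 1
    have := Nat.one_le_pow j q hq
    omega
  refine Submodule.mem_sup.2 ⟨innerDeriv q π (rankTwoPhi π a) (-Pi.single j 1),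
    LinearMap.mem_range_self _ _, π • ((1 - π ^ (q ^ j - 1)) • Pi.single j 1),
    LinearMap.mem_range_self _ _, ?_⟩
  simp only [innerDeriv, LinearMap.coe_mk, AddHom.coe_mk]
  rw [show -(Pi.single j 1 : ℕ → R) = (-1 : R) • Pi.single j 1 by simp, smul_left,
    single_comp_rankTwoPhi hq, hπ, mul_smul]
  module

theorem single_sub_smul_single_one_mem (hq : 0 < q) (π a : R) (i : ℕ) :
    Pi.single (i + 1) 1 - ((-1 : R) ^ i * a ^ (∑ k ∈ Finset.range i, q ^ k)) • Pi.single 1 1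
      ∈ extModPiKer q π (rankTwoPhi π a) := by
  induction i with
  | zero => simp
  | succ i ih =>
    have key := Submodule.sub_mem _ (single_add_two_add_mem hq π a i)
      (Submodule.smul_mem _ (a ^ q ^ i) ih)
    convert key using 1
    rw [Finset.sum_range_succ, pow_add, pow_succ]
    module

end Tcomp

open Tcomp in
theorem stmt19_general (R : Type*) [CommRing R]
    (π : R)
    (q : ℕ) (hq : 3 ≤ q) (a : R)
    (φt : ℕ → R)
    (hφt : φt = fun n => if n = 0 then π else if n = 1 then a else if n = 2 then 1 else 0)
    (i : ℕ) :
    ∃ α β : ℕ → R,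
      ((fun n => if n = i + 1 then (1 : R) else 0)
          - ((-1 : R) ^ i * a ^ (∑ k ∈ Finset.range i, q ^ k)) •
              (fun n => if n = 1 then (1 : R) else 0))
        = (fun n => π * α n - tcomp R q α φt n) + π • β := by
  have single_eq (j : ℕ) : (fun n => if n = j then (1 : R) else 0) = Pi.single j 1 := by
    funext n
    rw [Pi.single_apply]
  obtain ⟨_, ⟨α, rfl⟩, _, ⟨β, rfl⟩, h⟩ :=
    Submodule.mem_sup.1 (single_sub_smul_single_one_mem (q := q) (by omega) π a i)
  subst hφt
  exact ⟨α, β, by rw [single_eq, single_eq, ← h]; rfl⟩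

/-- The relation (tauj): let `E` be a rank-2 Drinfeld module over a DVR `R` with
`φ_E(t)(x) = π x + a x^q + x^(q²)` and `q ≥ 3`.  In `Ext_A(E, Ĝₐ)`, the quotient of
`R{τ}^` by the inner derivations `π α - α ∘ φ_E(t)`, one has
`τ^(i+1) ≡ (-1)^i a^((q^i - 1)/(q - 1)) τ^1 mod π` for all `i ≥ 0`
(the exponent being the geometric sum `Σ_{k<i} q^k`); i.e. the difference is an inner
derivation plus a multiple of `π`. -/
theorem stmt19 (R : Type*) [CommRing R] [IsDomain R] [IsDiscreteValuationRing R]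
    (π : R) (hπ : Irreducible π)
    (q : ℕ) (hq : 3 ≤ q) (a : R)
    (φt : ℕ → R)
    (hφt : φt = fun n => if n = 0 then π else if n = 1 then a else if n = 2 then 1 else 0)
    (i : ℕ) :
    ∃ α β : ℕ → R,
      ((fun n => if n = i + 1 then (1 : R) else 0)
          - ((-1 : R) ^ i * a ^ (∑ k ∈ Finset.range i, q ^ k)) •
              (fun n => if n = 1 then (1 : R) else 0))
        = (fun n => π * α n - tcomp R q α φt n) + π • β :=
  stmt19_general R π q hq a φt hφt i
end
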